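/- arXiv:1208.2546 — 2 statements merged into one kernel-verified Lean document; each statement's English description precedes it below -/
import Mathlib

section
/- Let Ψ : ℝ⁴ → ℂ⁴ be a Dirac solution for the 4-potential a = (a₀,a₁,a₂,a₃) and mass κ. Then at every point of ℝ⁴ the following identity holds: 2i·a₁·(Ψ*δ₄Ψ) = −2κ·(Ψ*γ₁γ₄Ψ) + ∂₁↔(Ψ*δ₄Ψ) − ∂₂(Ψ*δ₃Ψ) + ∂₃(Ψ*δ₂Ψ) + i·∂₀(Ψ*δ₁Ψ). -/
noncomputable section

open Complex Matrix MeasureTheory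

/-- The Dirac matrix γ₁ in the standard representation. -/
def γ1 : Matrix (Fin 4) (Fin 4) ℂ := !![0,0,0,-I; 0,0,-I,0; 0,I,0,0; I,0,0,0]
/-- The Dirac matrix γ₂ in the standard representation. -/
def γ2 : Matrix (Fin 4) (Fin 4) ℂ := !![0,0,0,-1; 0,0,1,0; 0,1,0,0; -1,0,0,0]
/-- The Dirac matrix γ₃ in the standard representation. -/
def γ3 : Matrix (Fin 4) (Fin 4) ℂ := !![0,0,-I,0; 0,0,0,I; I,0,0,0; 0,-I,0,0]
/-- The Dirac matrix γ₄ in the standard representation. -/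
def γ4 : Matrix (Fin 4) (Fin 4) ℂ := !![1,0,0,0; 0,1,0,0; 0,0,-1,0; 0,0,0,-1]
/-- γ₅ = γ₁γ₂γ₃γ₄. -/
def γ5 : Matrix (Fin 4) (Fin 4) ℂ := γ1 * γ2 * γ3 * γ4
/-- δ₁ = γ₁ + γ₅γ₁. -/
def δ1 : Matrix (Fin 4) (Fin 4) ℂ := γ1 + γ5 * γ1
/-- δ₂ = γ₂ + γ₅γ₂. -/
def δ2 : Matrix (Fin 4) (Fin 4) ℂ := γ2 + γ5 * γ2
/-- δ₃ = γ₃ + γ₅γ₃. -/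
def δ3 : Matrix (Fin 4) (Fin 4) ℂ := γ3 + γ5 * γ3
/-- δ₄ = γ₄ + γ₅γ₄. -/
def δ4 : Matrix (Fin 4) (Fin 4) ℂ := γ4 + γ5 * γ4

/-- The sesquilinear form v* M v (v a column vector, v* its conjugate transpose). -/
def qc (M : Matrix (Fin 4) (Fin 4) ℂ) (v : Fin 4 → ℂ) : ℂ := star v ⬝ᵥ M.mulVec v
/-- The bilinear form vᵀ M v (v a column vector, vᵀ its transpose). -/
def qt (M : Matrix (Fin 4) (Fin 4) ℂ) (v : Fin 4 → ℂ) : ℂ := v ⬝ᵥ M.mulVec v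

/-- The partial derivative ∂_μ of a spinor field on ℝ⁴. -/
def pd (μ : Fin 4) (Ψ : (Fin 4 → ℝ) → Fin 4 → ℂ) (x : Fin 4 → ℝ) : Fin 4 → ℂ :=
  fderiv ℝ Ψ x (Pi.single μ 1)

/-- The partial derivative ∂_μ of a complex scalar field on ℝ⁴. -/
def pds (μ : Fin 4) (g : (Fin 4 → ℝ) → ℂ) (x : Fin 4 → ℝ) : ℂ :=
  fderiv ℝ g x (Pi.single μ 1)

/-- The bidirectional derivative ∂_μ↔(Ψ* M Ψ) := Ψ* M (∂_μΨ) − (∂_μΨ)* M Ψ. -/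
def bd (μ : Fin 4) (M : Matrix (Fin 4) (Fin 4) ℂ) (Ψ : (Fin 4 → ℝ) → Fin 4 → ℂ)
    (x : Fin 4 → ℝ) : ℂ :=
  star (Ψ x) ⬝ᵥ M.mulVec (pd μ Ψ x) - star (pd μ Ψ x) ⬝ᵥ M.mulVec (Ψ x)

/-- Ψ is a Dirac solution for the 4-potential (a₀,a₁,a₂,a₃) and mass κ:
Ψ is differentiable and Σ_{μ=1}^{3} γ_μ(∂_μΨ − i a_μΨ) − i γ₄(∂₀Ψ + i a₀Ψ) + κΨ = 0 on ℝ⁴. -/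
def DiracSolution (Ψ : (Fin 4 → ℝ) → Fin 4 → ℂ)
    (a0 a1 a2 a3 : (Fin 4 → ℝ) → ℝ) (κ : ℝ) : Prop :=
  Differentiable ℝ Ψ ∧ ∀ x : Fin 4 → ℝ,
    γ1.mulVec (pd 1 Ψ x - (I * (a1 x : ℂ)) • Ψ x)
      + γ2.mulVec (pd 2 Ψ x - (I * (a2 x : ℂ)) • Ψ x)
      + γ3.mulVec (pd 3 Ψ x - (I * (a3 x : ℂ)) • Ψ x)
      - I • γ4.mulVec (pd 0 Ψ x + (I * (a0 x : ℂ)) • Ψ x)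
      + (κ : ℂ) • Ψ x = 0

/-!
Contract the Dirac equation `DΨ = 0` with `Ψ* γ₁γ₄(1 + γ₅)` on the left, contract its adjoint
with `γ₁γ₄(1 − γ₅) Ψ` on the right, and add. The mass terms give `−2κ Ψ*γ₁γ₄Ψ`, the potentials
`a₀, a₂, a₃` cancel, and by the Leibniz rule the derivative terms recombine into `∂₁↔(Ψ*δ₄Ψ)`
and the derivatives of the densities `Ψ*δ_μΨ`.
-/

section Leibniz

variable {𝕜 E 𝔸 ι : Type*} [NontriviallyNormedField 𝕜] [NormedAddCommGroup E] [NormedSpace 𝕜 E]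
  [NormedCommRing 𝔸] [NormedAlgebra 𝕜 𝔸] [Fintype ι] {f g : E → ι → 𝔸} {x : E}

theorem DifferentiableAt.dotProduct (hf : DifferentiableAt 𝕜 f x) (hg : DifferentiableAt 𝕜 g x) :
    DifferentiableAt 𝕜 (fun y => f y ⬝ᵥ g y) x :=
  DifferentiableAt.fun_sum fun i _ =>
    (differentiableAt_pi.1 hf i).fun_mul (differentiableAt_pi.1 hg i)

theorem fderiv_dotProduct_apply (hf : DifferentiableAt 𝕜 f x) (hg : DifferentiableAt 𝕜 g x)
    (v : E) :
    fderiv 𝕜 (fun y => f y ⬝ᵥ g y) x v = fderiv 𝕜 f x v ⬝ᵥ g x + f x ⬝ᵥ fderiv 𝕜 g x v := by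
  have hfi := differentiableAt_pi.1 hf
  have hgi := differentiableAt_pi.1 hg
  change fderiv 𝕜 (fun y => ∑ i, f y i * g y i) x v = _
  rw [fderiv_fun_sum fun i _ => (hfi i).fun_mul (hgi i)]
  simp [fderiv_fun_mul (hfi _) (hgi _), fderiv_apply hf, fderiv_apply hg, dotProduct,
    Finset.sum_add_distrib, add_comm, mul_comm]

theorem DifferentiableAt.mulVec (M : Matrix ι ι 𝔸) (hg : DifferentiableAt 𝕜 g x) :
    DifferentiableAt 𝕜 (fun y => M *ᵥ g y) x :=
  differentiableAt_pi.2 fun _ => (differentiableAt_const _).dotProduct hg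

theorem fderiv_mulVec_apply (M : Matrix ι ι 𝔸) (hg : DifferentiableAt 𝕜 g x) (v : E) :
    fderiv 𝕜 (fun y => M *ᵥ g y) x v = M *ᵥ fderiv 𝕜 g x v := by
  ext i
  have hi := congrArg (· v) (fderiv_apply (hg.mulVec M) i)
  simp only [ContinuousLinearMap.comp_apply, ContinuousLinearMap.proj_apply] at hi
  rw [← hi]
  exact (fderiv_dotProduct_apply (differentiableAt_const (M i)) hg v).trans (by simp [mulVec])

end Leibniz

theorem pds_qc {Ψ : (Fin 4 → ℝ) → Fin 4 → ℂ} {x : Fin 4 → ℝ} (hΨ : DifferentiableAt ℝ Ψ x)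
    (M : Matrix (Fin 4) (Fin 4) ℂ) (μ : Fin 4) :
    pds μ (fun y => qc M (Ψ y)) x
      = star (pd μ Ψ x) ⬝ᵥ M *ᵥ Ψ x + star (Ψ x) ⬝ᵥ M *ᵥ pd μ Ψ x := by
  simp only [pds, qc]
  rw [fderiv_dotProduct_apply hΨ.star (hΨ.mulVec M), fderiv_star, fderiv_mulVec_apply M hΨ]
  rfl

theorem γ5_eq : γ5 = !![0,0,-1,0; 0,0,0,-1; -1,0,0,0; 0,-1,0,0] := by
  simp [γ5, γ1, γ2, γ3, γ4]

theorem γ1_mul_γ4 : γ1 * γ4 = !![0,0,0,I; 0,0,I,0; 0,I,0,0; I,0,0,0] := by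
  simp [γ1, γ4]

theorem γ1_mul_γ4_mul_one_add_γ5 :
    γ1 * γ4 * (1 + γ5) = !![0,-I,0,I; -I,0,I,0; 0,I,0,-I; I,0,-I,0] := by
  simp [γ1_mul_γ4, γ5_eq, Matrix.mul_add]

theorem γ1_mul_γ4_mul_one_sub_γ5 :
    γ1 * γ4 * (1 - γ5) = !![0,I,0,I; I,0,I,0; 0,I,0,I; I,0,I,0] := by
  simp [γ1_mul_γ4, γ5_eq, sub_eq_add_neg, Matrix.mul_add]

theorem δ1_eq : δ1 = !![0,-I,0,-I; -I,0,-I,0; 0,I,0,I; I,0,I,0] := by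
  simp [δ1, γ5_eq, γ1]

theorem δ2_eq : δ2 = !![0,-1,0,-1; 1,0,1,0; 0,1,0,1; -1,0,-1,0] := by
  simp [δ2, γ5_eq, γ2]

theorem δ3_eq : δ3 = !![-I,0,-I,0; 0,I,0,I; I,0,I,0; 0,-I,0,-I] := by
  simp [δ3, γ5_eq, γ3]

theorem δ4_eq : δ4 = !![1,0,1,0; 0,1,0,1; -1,0,-1,0; 0,-1,0,-1] := by
  simp [δ4, γ5_eq, γ4]

/-- The left-hand side of the Dirac equation at a point, with `∂_μΨ` replaced by the vector
`d μ`. -/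
def diracOp (a₀ a₁ a₂ a₃ κ : ℝ) (ψ : Fin 4 → ℂ) (d : Fin 4 → Fin 4 → ℂ) : Fin 4 → ℂ :=
  γ1 *ᵥ (d 1 - (I * a₁) • ψ) + γ2 *ᵥ (d 2 - (I * a₂) • ψ) + γ3 *ᵥ (d 3 - (I * a₃) • ψ)
    - I • γ4 *ᵥ (d 0 + (I * a₀) • ψ) + (κ : ℂ) • ψ

theorem gordon_decomposition_a1 (a₀ a₁ a₂ a₃ κ : ℝ) (ψ : Fin 4 → ℂ) (d : Fin 4 → Fin 4 → ℂ) :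
    2 * I * a₁ * qc δ4 ψ
      - (-2 * κ * qc (γ1 * γ4) ψ + (star ψ ⬝ᵥ δ4 *ᵥ d 1 - star (d 1) ⬝ᵥ δ4 *ᵥ ψ)
          - (star (d 2) ⬝ᵥ δ3 *ᵥ ψ + star ψ ⬝ᵥ δ3 *ᵥ d 2)
          + (star (d 3) ⬝ᵥ δ2 *ᵥ ψ + star ψ ⬝ᵥ δ2 *ᵥ d 3)
          + I * (star (d 0) ⬝ᵥ δ1 *ᵥ ψ + star ψ ⬝ᵥ δ1 *ᵥ d 0))
      = star ψ ⬝ᵥ (γ1 * γ4 * (1 + γ5)) *ᵥ diracOp a₀ a₁ a₂ a₃ κ ψ d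
        + star (diracOp a₀ a₁ a₂ a₃ κ ψ d) ⬝ᵥ (γ1 * γ4 * (1 - γ5)) *ᵥ ψ := by
  rw [γ1_mul_γ4_mul_one_add_γ5, γ1_mul_γ4_mul_one_sub_γ5, γ1_mul_γ4, δ1_eq, δ2_eq, δ3_eq, δ4_eq]
  simp only [qc, dotProduct, Pi.star_apply, RCLike.star_def, mulVec, of_apply, cons_val',
    cons_val_fin_one, Fin.sum_univ_four, Fin.isValue, cons_val_zero, cons_val_one, cons_val,
    one_mul, zero_mul, add_zero, zero_add, neg_mul, diracOp, γ1, cons_mulVec, Pi.sub_apply,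
    Pi.smul_apply, smul_eq_mul, empty_mulVec, γ2, neg_sub, add_cons, vecHead, vecTail,
    Nat.succ_eq_add_one, Nat.reduceAdd, Function.comp_apply, Fin.succ_zero_eq_one,
    Fin.succ_one_eq_two, Fin.reduceSucc, empty_add_empty, γ3, γ4, Pi.add_apply, neg_add_rev,
    smul_cons, smul_empty, sub_cons, empty_sub_empty, coe_smul, real_smul, cons_add, map_add,
    map_sub, map_neg, map_mul, conj_I, conj_ofReal, sub_neg_eq_add, neg_neg]
  ring_nf
  simp only [I_sq, I_pow_three]
  ring

theorem identity_a1_of_diracOp_eq_zero {a₀ a₁ a₂ a₃ κ : ℝ} {ψ : Fin 4 → ℂ}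
    {d : Fin 4 → Fin 4 → ℂ} (h : diracOp a₀ a₁ a₂ a₃ κ ψ d = 0) :
    2 * I * a₁ * qc δ4 ψ
      = -2 * κ * qc (γ1 * γ4) ψ + (star ψ ⬝ᵥ δ4 *ᵥ d 1 - star (d 1) ⬝ᵥ δ4 *ᵥ ψ)
          - (star (d 2) ⬝ᵥ δ3 *ᵥ ψ + star ψ ⬝ᵥ δ3 *ᵥ d 2)
          + (star (d 3) ⬝ᵥ δ2 *ᵥ ψ + star ψ ⬝ᵥ δ2 *ᵥ d 3)
          + I * (star (d 0) ⬝ᵥ δ1 *ᵥ ψ + star ψ ⬝ᵥ δ1 *ᵥ d 0) := by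
  have h_gordon := gordon_decomposition_a1 a₀ a₁ a₂ a₃ κ ψ d
  rwa [h, mulVec_zero, dotProduct_zero, star_zero, zero_dotProduct, add_zero, sub_eq_zero]
    at h_gordon

/-- for a Dirac solution Ψ,
2i·a₁·(Ψ*δ₄Ψ) = −2κ·(Ψ*γ₁γ₄Ψ) + ∂₁↔(Ψ*δ₄Ψ) − ∂₂(Ψ*δ₃Ψ) + ∂₃(Ψ*δ₂Ψ) + i·∂₀(Ψ*δ₁Ψ)
everywhere. -/
theorem identity_a1
    (Ψ : (Fin 4 → ℝ) → Fin 4 → ℂ)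
    (a0 a1 a2 a3 : (Fin 4 → ℝ) → ℝ) (κ : ℝ)
    (hΨ : DiracSolution Ψ a0 a1 a2 a3 κ) :
    ∀ x : Fin 4 → ℝ,
      2 * I * (a1 x : ℂ) * qc δ4 (Ψ x)
        = -2 * (κ : ℂ) * qc (γ1 * γ4) (Ψ x)
            + bd 1 δ4 Ψ x
            - pds 2 (fun y => qc δ3 (Ψ y)) x
            + pds 3 (fun y => qc δ2 (Ψ y)) x
            + I * pds 0 (fun y => qc δ1 (Ψ y)) x := by
  intro x
  rw [pds_qc (hΨ.1 x), pds_qc (hΨ.1 x), pds_qc (hΨ.1 x)]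
  exact identity_a1_of_diracOp_eq_zero (d := (pd · Ψ x)) (hΨ.2 x)
end
end

section
/- Let v ∈ ℂ⁴ satisfy the system of bilinear equations i·vᵀγ₁γ₂γ₄v = vᵀγ₂v, −i·vᵀγ₄v = vᵀγ₂v, and −i·vᵀγ₂γ₃γ₄v = vᵀγ₂v. Then vᵀγ₂v = 0. -/
noncomputable section

open Complex Matrix MeasureTheory

set_option maxHeartbeats 1000000 in
lemma g124 : γ1 * γ2 * γ4 = !![I,0,0,0; 0,-I,0,0; 0,0,-I,0; 0,0,0,I] := by
  ext i j
  fin_cases i <;> fin_cases j <;>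
    simp [γ1, γ2, γ4, Matrix.mul_apply, Fin.sum_univ_four, Matrix.vecHead, Matrix.vecTail]

set_option maxHeartbeats 1000000 in
lemma g234 : γ2 * γ3 * γ4 = !![0,I,0,0; I,0,0,0; 0,0,0,-I; 0,0,-I,0] := by
  ext i j
  fin_cases i <;> fin_cases j <;>
    simp [γ2, γ3, γ4, Matrix.mul_apply, Fin.sum_univ_four, Matrix.vecHead, Matrix.vecTail]

set_option maxHeartbeats 1000000 in
lemma qtA (v : Fin 4 → ℂ) :
    qt !![I,0,0,0; 0,-I,0,0; 0,0,-I,0; 0,0,0,I] v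
      = I * (v 0 ^ 2 - v 1 ^ 2 - v 2 ^ 2 + v 3 ^ 2) := by
  simp [qt, dotProduct, mulVec, Fin.sum_univ_four, Matrix.vecHead, Matrix.vecTail]
  ring

set_option maxHeartbeats 1000000 in
lemma qtB (v : Fin 4 → ℂ) :
    qt γ4 v = v 0 ^ 2 + v 1 ^ 2 - v 2 ^ 2 - v 3 ^ 2 := by
  simp [qt, γ4, dotProduct, mulVec, Fin.sum_univ_four, Matrix.vecHead, Matrix.vecTail]
  ring

set_option maxHeartbeats 1000000 in
lemma qtC (v : Fin 4 → ℂ) :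
    qt !![0,I,0,0; I,0,0,0; 0,0,0,-I; 0,0,-I,0] v
      = 2 * I * (v 0 * v 1 - v 2 * v 3) := by
  simp [qt, dotProduct, mulVec, Fin.sum_univ_four, Matrix.vecHead, Matrix.vecTail]
  ring

set_option maxHeartbeats 1000000 in
lemma qtD (v : Fin 4 → ℂ) :
    qt γ2 v = 2 * (v 1 * v 2 - v 0 * v 3) := by
  simp [qt, γ2, dotProduct, mulVec, Fin.sum_univ_four, Matrix.vecHead, Matrix.vecTail]
  ring

set_option maxHeartbeats 1000000 in
/-- if v ∈ ℂ⁴ satisfies i·vᵀγ₁γ₂γ₄v = vᵀγ₂v, −i·vᵀγ₄v = vᵀγ₂v and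
−i·vᵀγ₂γ₃γ₄v = vᵀγ₂v, then vᵀγ₂v = 0. -/
theorem bilinear_system_forces_zero
    (v : Fin 4 → ℂ)
    (h1 : I * qt (γ1 * γ2 * γ4) v = qt γ2 v)
    (h2 : -I * qt γ4 v = qt γ2 v)
    (h3 : -I * qt (γ2 * γ3 * γ4) v = qt γ2 v) :
    qt γ2 v = 0 := by
  rw [g124, qtA, qtD] at h1
  rw [qtB, qtD] at h2
  rw [g234, qtC, qtD] at h3
  rw [qtD]
  have hI : I * I = -1 := Complex.I_mul_I
  have hneP : (I + 1 : ℂ) ≠ 0 := by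
    intro h
    have := congrArg Complex.im h
    simp at this
  have hneM : (I - 1 : ℂ) ≠ 0 := by
    intro h
    have := congrArg Complex.im h
    simp at this
  have e3 : (v 0 - v 2) * (v 1 + v 3) = 0 := by
    linear_combination (1/2 : ℂ) * h3 + (v 0 * v 1 - v 2 * v 3) * hI
  rcases mul_eq_zero.mp e3 with h | h
  · have hac : v 0 = v 2 := by linear_combination h
    rw [hac] at h1 h2 ⊢
    have e1 : (v 1 - v 3) * (v 1 + v 3 - 2 * v 2) = 0 := by
      linear_combination h1 + (v 1 ^ 2 - v 3 ^ 2) * hI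
    rcases mul_eq_zero.mp e1 with h' | h'
    · linear_combination 2 * v 2 * h'
    · have key : (I + 1) * (2 * (v 1 * v 2 - v 2 * v 3)) = 0 := by
        linear_combination -h2 - I * (v 1 - v 3) * h'
      rcases mul_eq_zero.mp key with hk | hk
      · exact absurd hk hneP
      · exact hk
  · have hd : v 3 = -v 1 := by linear_combination h
    rw [hd] at h1 h2 ⊢
    have e1 : (v 0 + v 2) * (v 0 + 2 * v 1 - v 2) = 0 := by
      linear_combination -h1 + (v 0 ^ 2 - v 2 ^ 2) * hI
    rcases mul_eq_zero.mp e1 with h' | h'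
    · linear_combination 2 * v 1 * h'
    · have key : (I - 1) * (2 * (v 1 * v 2 - v 0 * -v 1)) = 0 := by
        linear_combination h2 + I * (v 0 + v 2) * h'
      rcases mul_eq_zero.mp key with hk | hk
      · exact absurd hk hneM
      · exact hk
end
end
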